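/- Let s, t > 1 be odd integers with gcd(s, t) = 1, and let k, k' : ZMod s and ℓ, ℓ' : ZMod t. Then the graph D_{k,ℓ} ⊔ D_{k',ℓ'} on ZMod s × ZMod t contains a Hamiltonian path if and only if k − k' is a unit of ZMod s and ℓ − ℓ' is a unit of ZMod t. -/

import Mathlib

/-!
Put `d = c - c'` for the graph `x ~ y ⟺ x ≠ y ∧ x + y ∈ {c, c'}` on an abelian group `V` of odd
order, and `H = ⟨d⟩`. Modulo `H` every edge sums to `c`, so a Hamiltonian path starting at `x` meets
only the classes of `x` and `c - x`; hence `[V : H] ≤ 2`, and since the index divides the odd `|V|`,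
`H = V`. Conversely, if `d` generates `V` and `2a = c`, the zigzag `a, a - d, a + d, a - 2d, …` of
length `|V|` visits every vertex once, and consecutive sums alternate between `c'` and `c`.
For `V = ZMod s × ZMod t` with `s, t` coprime every element is an integer by the Chinese remainder
theorem, so `d` generates `V` exactly when it is a unit.
-/

/-- For `s, t ≥ 1`, `k : ZMod s`, `ℓ : ZMod t`, the graph `D k ℓ` on vertex set
`ZMod s × ZMod t` in which distinct vertices `(i, j)` and `(i', j')` are
adjacent iff `i + i' = k` and `j + j' = ℓ`. -/
def D (s t : ℕ) (k : ZMod s) (ℓ : ZMod t) : SimpleGraph (ZMod s × ZMod t) where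
  Adj x y := x ≠ y ∧ x.1 + y.1 = k ∧ x.2 + y.2 = ℓ
  symm := ⟨fun x y ⟨h1, h2, h3⟩ =>
    ⟨h1.symm, by rwa [add_comm], by rwa [add_comm]⟩⟩
  loopless := ⟨fun x ⟨h, _⟩ => h rfl⟩

/-- A graph has a Hamiltonian path if some walk in it is a Hamiltonian path. -/
def HasHamiltonianPath {V : Type*} [DecidableEq V] (G : SimpleGraph V) : Prop :=
  ∃ (a b : V) (p : G.Walk a b), p.IsHamiltonian

namespace SimpleGraph

variable {V : Type*} {G : SimpleGraph V}

theorem Walk.forall_mem_support_of_adj {S : Set V} (hS : ∀ x y, G.Adj x y → x ∈ S → y ∈ S)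
    {u v : V} (p : G.Walk u v) (hu : u ∈ S) : ∀ w ∈ p.support, w ∈ S := by
  induction p with
  | nil => simpa using hu
  | cons h _ ih => simpa [hu] using ih (hS _ _ h hu)

theorem hasHamiltonianPath_of_bijective [DecidableEq V] [Nonempty V] {n : ℕ} (f : Fin n → V)
    (hf : Function.Bijective f)
    (hadj : ∀ i (hi : i + 1 < n), G.Adj (f ⟨i, Nat.lt_of_succ_lt hi⟩) (f ⟨i + 1, hi⟩)) :
    HasHamiltonianPath G := by
  have hne : List.ofFn f ≠ [] := by
    obtain ⟨i, -⟩ := hf.2 (Classical.arbitrary V)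
    simpa using i.pos.ne'
  refine ⟨_, _, Walk.ofSupport _ hne (List.isChain_ofFn.mpr hadj), fun v => ?_⟩
  rw [Walk.support_ofSupport]
  exact List.count_eq_one_of_mem (List.nodup_ofFn.mpr hf.1) (List.mem_ofFn.mpr (hf.2 v))

end SimpleGraph

-- `0, -1, 1, -2, 2, …`: the first `n` values are `n` consecutive integers.
def zigzag (n : ℕ) : ℤ := (-1) ^ n * ((n + 1) / 2 : ℕ)

theorem zigzag_two_mul (m : ℕ) : zigzag (2 * m) = m := by
  rw [zigzag, pow_mul, neg_one_sq, one_pow, one_mul]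
  omega

theorem zigzag_two_mul_add_one (m : ℕ) : zigzag (2 * m + 1) = -(m + 1) := by
  rw [zigzag, pow_succ, pow_mul, neg_one_sq, one_pow, one_mul, neg_one_mul]
  omega

theorem zigzag_injective : Function.Injective zigzag := by
  intro i j h
  rcases Nat.even_or_odd' i with ⟨p, rfl | rfl⟩ <;>
    rcases Nat.even_or_odd' j with ⟨q, rfl | rfl⟩ <;>
    simp only [zigzag_two_mul, zigzag_two_mul_add_one] at h <;> omega

theorem zigzag_add_zigzag_succ (n : ℕ) :
    zigzag n + zigzag (n + 1) = 0 ∨ zigzag n + zigzag (n + 1) = -1 := by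
  rcases Nat.even_or_odd' n with ⟨m, rfl | rfl⟩
  · rw [zigzag_two_mul, zigzag_two_mul_add_one]; omega
  · rw [zigzag_two_mul_add_one, show 2 * m + 1 + 1 = 2 * (m + 1) by ring, zigzag_two_mul]; omega

theorem abs_zigzag_sub_lt {i j n : ℕ} (hi : i < n) (hj : j < n) : |zigzag i - zigzag j| < n := by
  rw [abs_lt]
  rcases Nat.even_or_odd' i with ⟨p, rfl | rfl⟩ <;>
    rcases Nat.even_or_odd' j with ⟨q, rfl | rfl⟩ <;>
    simp only [zigzag_two_mul, zigzag_two_mul_add_one] <;> omega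

theorem injOn_zigzag_zsmul {G : Type*} [AddGroup G] (d : G) :
    Set.InjOn (fun i => zigzag i • d) (Set.Iio (addOrderOf d)) := by
  intro i hi j hj h
  have hdvd : (addOrderOf d : ℤ) ∣ zigzag i - zigzag j :=
    addOrderOf_dvd_iff_zsmul_eq_zero.mpr (by rw [sub_zsmul, ← sub_eq_add_neg, sub_eq_zero]; exact h)
  exact zigzag_injective <|
    sub_eq_zero.mp (Int.eq_zero_of_abs_lt_dvd hdvd (abs_zigzag_sub_lt hi hj))

section SumGraph

variable {V : Type*} [AddCommGroup V]

def sumGraph (S : Set V) : SimpleGraph V where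
  Adj x y := x ≠ y ∧ x + y ∈ S
  symm := ⟨fun x y ⟨hne, hS⟩ => ⟨hne.symm, by rwa [add_comm]⟩⟩
  loopless := ⟨fun _ ⟨h, _⟩ => h rfl⟩

theorem exists_add_self_eq (hodd : Odd (Nat.card V)) (c : V) : ∃ a : V, a + a = c := by
  obtain ⟨m, hm⟩ := hodd
  refine ⟨(m + 1) • c, ?_⟩
  rw [← add_nsmul, show m + 1 + (m + 1) = Nat.card V + 1 by omega, add_nsmul, card_nsmul_eq_zero',
    zero_add, one_nsmul]

theorem zmultiples_sub_eq_top_of_hasHamiltonianPath [DecidableEq V]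
    (hodd : Odd (Nat.card V)) {c c' : V} (h : HasHamiltonianPath (sumGraph {c, c'})) :
    AddSubgroup.zmultiples (c - c') = ⊤ := by
  obtain ⟨x, _, p, hp⟩ := h
  set H := AddSubgroup.zmultiples (c - c')
  have hc' : (c' : V ⧸ H) = c :=
    (QuotientAddGroup.eq_iff_sub_mem.mpr (AddSubgroup.mem_zmultiples _)).symm
  have hcover : ∀ v : V, (v : V ⧸ H) = x ∨ (v : V ⧸ H) = (c : V ⧸ H) - x := by
    refine fun v => p.forall_mem_support_of_adj
      (S := {y : V | (y : V ⧸ H) = x ∨ (y : V ⧸ H) = (c : V ⧸ H) - x}) ?_ (Or.inl rfl) v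
      (hp.mem_support v)
    rintro y z ⟨-, hyz⟩ hy
    have hsum : ((y + z : V) : V ⧸ H) = c := by
      obtain h | h : y + z = c ∨ y + z = c' := hyz
      exacts [congrArg _ h, h ▸ hc']
    have hz : (z : V ⧸ H) = c - y := by rw [eq_sub_iff_add_eq', ← QuotientAddGroup.mk_add, hsum]
    rcases hy with hy | hy
    · exact Or.inr (by rw [hz, hy])
    · exact Or.inl (by rw [hz, hy, sub_sub_cancel])
  have hindex : H.index ≤ 2 := by
    have hsurj :
        Function.Surjective fun b : Bool => if b then (x : V ⧸ H) else (c : V ⧸ H) - x := by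
      intro q
      induction q using QuotientAddGroup.induction_on with
      | H v => rcases hcover v with hv | hv <;> [exact ⟨true, hv.symm⟩; exact ⟨false, hv.symm⟩]
    simpa [AddSubgroup.index_eq_card] using Nat.card_le_card_of_surjective _ hsurj
  obtain ⟨m, hm⟩ := hodd.of_dvd_nat H.index_dvd_card
  exact AddSubgroup.index_eq_one.mp (by omega)

theorem hasHamiltonianPath_of_zmultiples_sub_eq_top [DecidableEq V]
    (hodd : Odd (Nat.card V)) {c c' : V} (h : AddSubgroup.zmultiples (c - c') = ⊤) :
    HasHamiltonianPath (sumGraph {c, c'}) := by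
  have hord : addOrderOf (c - c') = Nat.card V := by
    rw [← Nat.card_zmultiples, h, AddSubgroup.card_top]
  have : Finite V := Nat.finite_of_card_ne_zero hodd.pos.ne'
  have : Nonempty V := ⟨c⟩
  obtain ⟨a, ha⟩ := exists_add_self_eq hodd c
  set f : Fin (Nat.card V) → V := fun i => a + zigzag i • (c - c')
  have hinj : f.Injective := fun i j hij => Fin.ext <|
    injOn_zigzag_zsmul (c - c') (by simp [hord]) (by simp [hord]) (add_left_cancel hij)
  refine SimpleGraph.hasHamiltonianPath_of_bijective f
    (hinj.bijective_of_nat_card_le (by simp)) fun i hi => ⟨?_, ?_⟩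
  · exact hinj.ne (by simp [Fin.ext_iff])
  · have hsum : f ⟨i, Nat.lt_of_succ_lt hi⟩ + f ⟨i + 1, hi⟩ =
        c + (zigzag i + zigzag (i + 1)) • (c - c') := by
      simp only [f, add_zsmul, ← ha]; abel
    simp only [Set.mem_insert_iff, Set.mem_singleton_iff]
    rcases zigzag_add_zigzag_succ i with h0 | h1
    · left; rw [hsum, h0, zero_zsmul, add_zero]
    · right; rw [hsum, h1, neg_one_zsmul]; abel

theorem hasHamiltonianPath_sumGraph_pair_iff [DecidableEq V]
    (hodd : Odd (Nat.card V)) {c c' : V} :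
    HasHamiltonianPath (sumGraph {c, c'}) ↔ AddSubgroup.zmultiples (c - c') = ⊤ :=
  ⟨zmultiples_sub_eq_top_of_hasHamiltonianPath hodd,
    hasHamiltonianPath_of_zmultiples_sub_eq_top hodd⟩

end SumGraph

theorem zmultiples_eq_top_iff_isUnit {R : Type*} [CommRing R]
    (hR : Function.Surjective (Int.cast : ℤ → R)) {x : R} :
    AddSubgroup.zmultiples x = ⊤ ↔ IsUnit x := by
  constructor
  · intro h
    obtain ⟨n, hn⟩ := AddSubgroup.mem_zmultiples_iff.mp (h ▸ AddSubgroup.mem_top (1 : R))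
    exact IsUnit.of_mul_eq_one_right (n : R) (by rwa [← zsmul_eq_mul])
  · rintro ⟨u, rfl⟩
    refine AddSubgroup.eq_top_iff' _ |>.mpr fun y => ?_
    obtain ⟨n, hn⟩ := hR (y * ↑u⁻¹)
    exact AddSubgroup.mem_zmultiples_iff.mpr
      ⟨n, by rw [zsmul_eq_mul, hn, Units.inv_mul_cancel_right]⟩

theorem ZMod.intCast_surjective_prod {s t : ℕ} (hco : s.Coprime t) :
    Function.Surjective (Int.cast : ℤ → ZMod s × ZMod t) := by
  intro y
  obtain ⟨n, hn⟩ := ZMod.intCast_surjective ((ZMod.chineseRemainder hco).symm y)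
  exact ⟨n, by rw [← map_intCast (ZMod.chineseRemainder hco), hn, RingEquiv.apply_symm_apply]⟩

theorem D_sup_D_eq_sumGraph (s t : ℕ) (k k' : ZMod s) (ℓ ℓ' : ZMod t) :
    D s t k ℓ ⊔ D s t k' ℓ' = sumGraph {(k, ℓ), (k', ℓ')} := by
  ext x y
  simp only [SimpleGraph.sup_adj, D, sumGraph, Set.mem_insert_iff, Set.mem_singleton_iff,
    Prod.ext_iff, Prod.fst_add, Prod.snd_add]
  tauto

theorem stmt_11_general (s t : ℕ)
    (hsodd : Odd s) (htodd : Odd t) (hco : Nat.Coprime s t)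
    (k k' : ZMod s) (ℓ ℓ' : ZMod t) :
    HasHamiltonianPath (D s t k ℓ ⊔ D s t k' ℓ') ↔
      IsUnit (k - k') ∧ IsUnit (ℓ - ℓ') := by
  have hodd : Odd (Nat.card (ZMod s × ZMod t)) := by
    rw [Nat.card_prod, Nat.card_zmod, Nat.card_zmod]
    exact hsodd.mul htodd
  rw [D_sup_D_eq_sumGraph, hasHamiltonianPath_sumGraph_pair_iff hodd,
    zmultiples_eq_top_iff_isUnit (ZMod.intCast_surjective_prod hco), Prod.mk_sub_mk,
    Prod.isUnit_iff]

theorem stmt_11 (s t : ℕ) (hs : 1 < s) (ht : 1 < t)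
    (hsodd : Odd s) (htodd : Odd t) (hco : Nat.Coprime s t)
    (k k' : ZMod s) (ℓ ℓ' : ZMod t) :
    HasHamiltonianPath (D s t k ℓ ⊔ D s t k' ℓ') ↔
      IsUnit (k - k') ∧ IsUnit (ℓ - ℓ') :=
  stmt_11_general s t hsodd htodd hco k k' ℓ ℓ'
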